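/- Let K be a self-adjoint Markov operator on L²(μ) (i.e. K is self-adjoint, positivity-preserving, K1 = 1, so that its spectrum is contained in [-1,1]). Then for all positive integers m, n and all f ∈ L², one has ‖(Id − K^{2n})^{1/2} K^m f‖² ≤ (n/(2m)) ‖f‖². -/

import Mathlib

/-!
Put `a j = ‖K ^ j f‖²`. Self-adjointness gives `‖K y‖² = ⟪K² y, y⟫ ≤ ‖y‖ ‖K² y‖`, so `a` is
log-convex, and `‖K‖ ≤ 1` makes it nonincreasing; the left-hand side is `a m - a (m + n)`.
For a log-convex sequence the ratios `a (j + 1) / a j` increase, so with `r = a (m + 1) / a m ≤ 1`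
one has `a m ≤ r ^ m a 0` and `a (m + n) ≥ r ^ n a m`. Hence
`a m - a (m + n) ≤ r ^ m (1 - r ^ n) a 0`, and `t ^ m (1 - t ^ n) ≤ n / (2 m)` on `[0, 1]`.
-/

open scoped InnerProductSpace

open Real in
lemma natCast_mul_pow_mul_one_sub_le_half {t : ℝ} (ht0 : 0 ≤ t) (ht1 : t ≤ 1) (m : ℕ) :
    m * (t ^ m * (1 - t)) ≤ 1 / 2 := by
  rcases Nat.eq_zero_or_pos m with rfl | hm
  · norm_num
  have hm' : (0 : ℝ) < m := Nat.cast_pos.mpr hm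
  set x : ℝ := m * (1 - t) with hx
  have hpow : t ^ m ≤ exp (-x) := by
    have h := one_sub_div_pow_le_exp_neg (n := m) (t := x) (by rw [hx]; nlinarith)
    rwa [show 1 - x / m = t by rw [hx]; field_simp; ring] at h
  have hexp : exp (-1) ≤ 1 / 2 := by
    rw [exp_neg, one_div]
    exact inv_anti₀ two_pos exp_one_gt_two.le
  calc (m : ℝ) * (t ^ m * (1 - t)) = t ^ m * x := by ring
    _ ≤ exp (-x) * x := by gcongr
    _ ≤ 1 / 2 := by linarith [mul_exp_neg_le_exp_neg_one x]

lemma pow_mul_one_sub_pow_le {t : ℝ} (ht0 : 0 ≤ t) (ht1 : t ≤ 1) {m : ℕ} (hm : 0 < m) (n : ℕ) :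
    t ^ m * (1 - t ^ n) ≤ n / (2 * m) := by
  have hbernoulli : 1 - t ^ n ≤ n * (1 - t) := by
    have := one_add_mul_le_pow (a := t - 1) (by linarith) n
    simp only [add_sub_cancel] at this
    linarith
  have hhalf : t ^ m * (1 - t) ≤ 1 / (2 * m) := by
    rw [le_div_iff₀ (by positivity)]
    linarith [natCast_mul_pow_mul_one_sub_le_half ht0 ht1 m]
  calc t ^ m * (1 - t ^ n) ≤ t ^ m * (n * (1 - t)) := by gcongr
    _ = n * (t ^ m * (1 - t)) := by ring
    _ ≤ n * (1 / (2 * m)) := by gcongr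
    _ = n / (2 * m) := by ring

section LogConvex

variable {a : ℕ → ℝ} (ha : ∀ j, 0 ≤ a j) (hlog : ∀ j, a (j + 1) ^ 2 ≤ a j * a (j + 2))
include ha hlog

lemma mul_le_mul_succ_of_logConvex {i j : ℕ} (hij : i ≤ j) :
    a (i + 1) * a j ≤ a i * a (j + 1) := by
  induction j, hij using Nat.le_induction with
  | base => rw [mul_comm]
  | succ j _ ih =>
    rcases (ha (j + 1)).eq_or_lt with hzero | hpos
    · rw [← hzero, mul_zero]
      exact mul_nonneg (ha i) (ha _)
    have hpos' : 0 < a j := by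
      by_contra! h
      nlinarith [hlog j, ha (j + 2), le_antisymm h (ha j)]
    -- multiply `ih` by `hlog j`, then cancel `a j * a (j + 1)`
    have h := mul_le_mul ih (hlog j) (sq_nonneg _) (mul_nonneg (ha i) (ha _))
    refine le_of_mul_le_mul_right ?_ (mul_pos hpos' hpos)
    nlinarith [h]

lemma le_ratio_pow_mul_of_logConvex (m : ℕ) : a m ≤ (a (m + 1) / a m) ^ m * a 0 := by
  have hr : 0 ≤ a (m + 1) / a m := div_nonneg (ha _) (ha _)
  rcases (ha m).eq_or_lt with hzero | hpos
  · exact hzero.symm.le.trans (mul_nonneg (pow_nonneg hr _) (ha 0))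
  refine le_geom hr m fun k hk => ?_
  rw [div_mul_eq_mul_div, le_div_iff₀ hpos]
  exact (mul_le_mul_succ_of_logConvex ha hlog hk.le).trans_eq (mul_comm _ _)

lemma ratio_pow_mul_le_of_logConvex (m k : ℕ) : (a (m + 1) / a m) ^ k * a m ≤ a (m + k) := by
  have hr : 0 ≤ a (m + 1) / a m := div_nonneg (ha _) (ha _)
  rcases (ha m).eq_or_lt with hzero | hpos
  · rw [← hzero, mul_zero]
    exact ha _
  refine geom_le (u := fun i => a (m + i)) hr k fun i _ => ?_
  rw [div_mul_eq_mul_div, div_le_iff₀ hpos, mul_comm (a (m + (i + 1)))]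
  exact mul_le_mul_succ_of_logConvex ha hlog (Nat.le_add_right m i)

lemma sub_le_of_logConvex {m : ℕ} (hm : 0 < m) (hdec : a (m + 1) ≤ a m) (n : ℕ) :
    a m - a (m + n) ≤ n / (2 * m) * a 0 := by
  set r := a (m + 1) / a m
  have hr0 : 0 ≤ r := div_nonneg (ha _) (ha _)
  have hr1 : r ≤ 1 := div_le_one_of_le₀ hdec (ha m)
  have hrn : 0 ≤ 1 - r ^ n := sub_nonneg.mpr (pow_le_one₀ hr0 hr1)
  calc a m - a (m + n) ≤ a m - r ^ n * a m := by
        linarith [ratio_pow_mul_le_of_logConvex ha hlog m n]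
    _ = (1 - r ^ n) * a m := by ring
    _ ≤ (1 - r ^ n) * (r ^ m * a 0) := by
        gcongr; exact le_ratio_pow_mul_of_logConvex ha hlog m
    _ = r ^ m * (1 - r ^ n) * a 0 := by ring
    _ ≤ n / (2 * m) * a 0 := by
        gcongr ?_ * _
        · exact ha 0
        · exact pow_mul_one_sub_pow_le hr0 hr1 hm n

end LogConvex

lemma IsSelfAdjoint.norm_apply_sq_le {𝕜 E : Type*} [RCLike 𝕜] [NormedAddCommGroup E]
    [InnerProductSpace 𝕜 E] [CompleteSpace E] {T : E →L[𝕜] E} (hT : IsSelfAdjoint T) (x : E) :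
    ‖T x‖ ^ 2 ≤ ‖x‖ * ‖T (T x)‖ :=
  calc ‖T x‖ ^ 2 = RCLike.re ⟪T x, T x⟫_𝕜 := (inner_self_eq_norm_sq _).symm
    _ = RCLike.re ⟪x, T (T x)⟫_𝕜 := by rw [hT.isSymmetric.apply_clm]
    _ ≤ ‖x‖ * ‖T (T x)‖ := re_inner_le_norm _ _

/-- Spectral bound for self-adjoint Markov operators: for a self-adjoint operator `K` with
spectrum in `[-1,1]` (equivalently `‖K‖ ≤ 1`), one has
`‖(Id - K^{2n})^{1/2} K^m f‖² = ⟪(Id - K^{2n}) K^m f, K^m f⟫ ≤ (n/(2m)) ‖f‖²`. -/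
theorem stmt2 {H : Type*} [NormedAddCommGroup H] [InnerProductSpace ℝ H] [CompleteSpace H]
    (K : H →L[ℝ] H) (hK : IsSelfAdjoint K) (hnorm : ‖K‖ ≤ 1) :
    ∀ m n : ℕ, 1 ≤ m → 1 ≤ n → ∀ f : H,
      ⟪(((1 : H →L[ℝ] H) - K ^ (2 * n)) ((K ^ m) f)), (K ^ m) f⟫_ℝ ≤
        ((n : ℝ) / (2 * m)) * ‖f‖ ^ 2 := by
  intro m n hm _ f
  set a : ℕ → ℝ := fun j => ‖(K ^ j) f‖ ^ 2
  have hsucc (j : ℕ) : (K ^ (j + 1)) f = K ((K ^ j) f) := by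
    rw [pow_succ', mul_apply_eq_comp]
  have hlog (j : ℕ) : a (j + 1) ^ 2 ≤ a j * a (j + 2) := by
    simp only [a, hsucc]
    rw [← mul_pow]
    exact pow_le_pow_left₀ (sq_nonneg _) (hK.norm_apply_sq_le _) 2
  have hdec : a (m + 1) ≤ a m := by
    simp only [a, hsucc]
    gcongr
    simpa using K.le_of_opNorm_le hnorm ((K ^ m) f)
  have hlhs : ⟪(((1 : H →L[ℝ] H) - K ^ (2 * n)) ((K ^ m) f)), (K ^ m) f⟫_ℝ = a m - a (m + n) := by
    rw [sub_apply, inner_sub_left, one_apply_eq_self, two_mul,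
      pow_add, mul_apply_eq_comp, (hK.pow n).isSymmetric.apply_clm,
      ← mul_apply_eq_comp, ← pow_add, add_comm n m, real_inner_self_eq_norm_sq,
      real_inner_self_eq_norm_sq]
  have ha0 : a 0 = ‖f‖ ^ 2 := by simp [a]
  rw [hlhs, ← ha0]
  exact sub_le_of_logConvex (a := a) (fun j => sq_nonneg _) hlog hm hdec n
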